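/- For a word w = (s_1,...,s_m) in a finite Coxeter group W, an element u ∈ W, and a simple reflection s, the set of distinguished u-subwords of the word ws with exactly k skips is in bijection with: the distinguished us-subwords of w with k skips if us < u; and with the disjoint union of distinguished us-subwords of w with k skips and distinguished u-subwords of w with k-1 skips if us > u. -/

import Mathlib

/-!
A subword of `w s` is a subword of `w` together with a choice for the last letter, and the
distinguished condition at the last position reads `ℓ(u) ≤ ℓ(u_(m) s)`. If the last letter is
used, then `u_(m) = u s` and the condition is vacuous; if it is skipped, then `u_(m) = u` and the
condition is `ℓ(u) ≤ ℓ(u s)`, which fails exactly when `u s < u`.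
-/

open scoped Classical

namespace Deodhar

variable {B : Type*} {W : Type*} [Group W] {M : CoxeterMatrix B}

/-- Given a word `w` in the simple-reflection indices and a subword-selector
`f : Fin w.length → Bool` (`f j = true` means the letter at position `j` is used,
`f j = false` means it is skipped, i.e. replaced by the identity `e`), the partial
product `u_(i) = u_1 ⋯ u_i` of the first `i` letters of the subword. -/
noncomputable def pp (cs : CoxeterSystem M W) (w : List B) (f : Fin w.length → Bool)
    (i : ℕ) : W :=
  ((((List.finRange w.length).take i)).map
    (fun j => if f j then cs.simple (w.get j) else 1)).prod

/-- The full product of the subword. -/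
noncomputable def sprod (cs : CoxeterSystem M W) (w : List B)
    (f : Fin w.length → Bool) : W :=
  pp cs w f w.length

/-- The subword selected by `f` is distinguished: for each position `j`,
`ℓ(u_(j+1)) ≤ ℓ(u_(j) · s_j)`, i.e. `u_(j+1) ≤ u_(j) s_j` in weak order. -/
def Distinguished (cs : CoxeterSystem M W) (w : List B) (f : Fin w.length → Bool) : Prop :=
  ∀ j : Fin w.length,
    cs.length (pp cs w f ((j : ℕ) + 1)) ≤ cs.length (pp cs w f (j : ℕ) * cs.simple (w.get j))

/-- The number of skips `e_u = #{j : u_j = e}`. -/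
def skips (w : List B) (f : Fin w.length → Bool) : ℕ :=
  (Finset.univ.filter (fun j : Fin w.length => f j = false)).card

/-- The number of descents `d_u = #{j : u_(j+1) < u_(j)}`. -/
noncomputable def descents (cs : CoxeterSystem M W) (w : List B)
    (f : Fin w.length → Bool) : ℕ :=
  (Finset.univ.filter (fun j : Fin w.length =>
    cs.length (pp cs w f ((j : ℕ) + 1)) < cs.length (pp cs w f (j : ℕ)))).card

/-- The reflection `s_j^{u_(j)} = u_(j) s_j u_(j)⁻¹` associated to position `j`. -/
noncomputable def reflAt (cs : CoxeterSystem M W) (w : List B) (f : Fin w.length → Bool)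
    (j : Fin w.length) : W :=
  pp cs w f (j : ℕ) * cs.simple (w.get j) * (pp cs w f (j : ℕ))⁻¹

/-- The color `k_j = #{i < j : u_i ≠ e and s_i^{u_(i)} = s_j^{u_(j)}}` of position `j`. -/
noncomputable def color (cs : CoxeterSystem M W) (w : List B) (f : Fin w.length → Bool)
    (j : Fin w.length) : ℕ :=
  (Finset.univ.filter (fun i : Fin w.length =>
    (i : ℕ) < (j : ℕ) ∧ f i = true ∧ reflAt cs w f i = reflAt cs w f j)).card

section Snoc

variable (cs : CoxeterSystem M W) (w : List B) (s : B)

theorem pp_succ (f : Fin w.length → Bool) {i : ℕ} (hi : i < w.length) :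
    pp cs w f (i + 1) =
      pp cs w f i * if f ⟨i, hi⟩ then cs.simple (w.get ⟨i, hi⟩) else 1 := by
  rw [pp, pp, List.take_add_one, List.getElem?_eq_getElem (by simpa using hi), List.map_append,
    List.prod_append]
  simp

def lastPos : Fin (w ++ [s]).length := ⟨w.length, by simp⟩

def init (f : Fin (w ++ [s]).length → Bool) : Fin w.length → Bool :=
  fun j => f (Fin.castLE (by simp) j)

def snoc (g : Fin w.length → Bool) (b : Bool) : Fin (w ++ [s]).length → Bool :=
  fun j => if h : (j : ℕ) < w.length then g ⟨j, h⟩ else b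

variable {w s}

theorem forall_fin_append_singleton {P : Fin (w ++ [s]).length → Prop} :
    (∀ j, P j) ↔ (∀ j : Fin w.length, P (Fin.castLE (by simp) j)) ∧ P (lastPos w s) := by
  refine ⟨fun h => ⟨fun j => h _, h _⟩, fun ⟨hw, hlast⟩ j => ?_⟩
  by_cases hj : (j : ℕ) < w.length
  · exact hw ⟨j, hj⟩
  · convert hlast
    have := j.isLt
    simp only [List.length_append, List.length_singleton] at this
    exact Fin.ext (by simp [lastPos]; omega)

theorem sum_fin_append_singleton {N : Type*} [AddCommMonoid N] (F : Fin (w ++ [s]).length → N) :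
    ∑ j, F j = ∑ j : Fin w.length, F (Fin.castLE (by simp) j) + F (lastPos w s) := by
  have hlen : w.length + 1 = (w ++ [s]).length := by simp
  rw [← Fintype.sum_equiv (finCongr hlen) (F ∘ finCongr hlen) F (fun _ => rfl),
    Fin.sum_univ_castSucc]
  rfl

@[simp]
theorem snoc_castLE (g : Fin w.length → Bool) (b : Bool) (j : Fin w.length) :
    snoc w s g b (Fin.castLE (by simp) j) = g j := by
  simp [snoc]

@[simp]
theorem init_snoc (g : Fin w.length → Bool) (b : Bool) : init w s (snoc w s g b) = g := by
  funext j
  exact snoc_castLE g b j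

@[simp]
theorem snoc_lastPos (g : Fin w.length → Bool) (b : Bool) :
    snoc w s g b (lastPos w s) = b := by
  simp [snoc, lastPos]

theorem snoc_init (f : Fin (w ++ [s]).length → Bool) :
    snoc w s (init w s f) (f (lastPos w s)) = f := by
  funext j
  revert j
  rw [forall_fin_append_singleton]
  simp [init]

theorem pp_snoc (g : Fin w.length → Bool) (b : Bool) {i : ℕ} (hi : i ≤ w.length) :
    pp cs (w ++ [s]) (snoc w s g b) i = pp cs w g i := by
  induction i with
  | zero => simp [pp]
  | succ i ih =>
    rw [pp_succ cs _ _ (by simp; omega), pp_succ cs _ _ hi, ih (by omega)]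
    simp [snoc, List.getElem_append_left (Nat.lt_of_succ_le hi), Nat.lt_of_succ_le hi]

theorem sprod_snoc (g : Fin w.length → Bool) (b : Bool) :
    sprod cs (w ++ [s]) (snoc w s g b) = sprod cs w g * if b then cs.simple s else 1 := by
  have hlen : (w ++ [s]).length = w.length + 1 := by simp
  rw [sprod, hlen, pp_succ cs _ _ (by simp), pp_snoc cs g b le_rfl]
  simp [sprod, snoc]

theorem distinguished_snoc_iff (g : Fin w.length → Bool) (b : Bool) :
    Distinguished cs (w ++ [s]) (snoc w s g b) ↔
      Distinguished cs w g ∧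
        cs.length (sprod cs w g * if b then cs.simple s else 1) ≤
          cs.length (sprod cs w g * cs.simple s) := by
  rw [Distinguished, forall_fin_append_singleton, ← sprod_snoc]
  refine and_congr (forall_congr' fun j => ?_) ?_
  · rw [Fin.val_castLE, pp_snoc cs g b j.isLt.le, pp_snoc cs g b j.isLt]
    simp [List.getElem_append_left j.isLt]
  · simp [sprod, lastPos, pp_snoc]

theorem skips_snoc (g : Fin w.length → Bool) (b : Bool) :
    skips (w ++ [s]) (snoc w s g b) = skips w g + if b then 0 else 1 := by
  rw [skips, skips, Finset.card_filter, Finset.card_filter, sum_fin_append_singleton]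
  cases b <;> simp

def snocEquiv : (Fin w.length → Bool) ⊕ (Fin w.length → Bool) ≃ (Fin (w ++ [s]).length → Bool) where
  toFun := Sum.elim (snoc w s · true) (snoc w s · false)
  invFun f := if f (lastPos w s) then .inl (init w s f) else .inr (init w s f)
  left_inv := by rintro (g | g) <;> simp
  right_inv f := by
    conv_rhs => rw [← snoc_init f]
    cases h : f (lastPos w s) <;> simp [h]

theorem snoc_true_iff {u : W} {k : ℕ} (g : Fin w.length → Bool) :
    (Distinguished cs (w ++ [s]) (snoc w s g true) ∧
        sprod cs (w ++ [s]) (snoc w s g true) = u ∧ skips (w ++ [s]) (snoc w s g true) = k) ↔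
      Distinguished cs w g ∧ sprod cs w g = u * cs.simple s ∧ skips w g = k := by
  simp only [distinguished_snoc_iff, sprod_snoc, skips_snoc, if_true, le_refl, and_true,
    add_zero, ← eq_mul_inv_iff_mul_eq, CoxeterSystem.inv_simple]

theorem snoc_false_iff {u : W} {k : ℕ} (g : Fin w.length → Bool) :
    (Distinguished cs (w ++ [s]) (snoc w s g false) ∧
        sprod cs (w ++ [s]) (snoc w s g false) = u ∧ skips (w ++ [s]) (snoc w s g false) = k) ↔
      cs.length u ≤ cs.length (u * cs.simple s) ∧
        Distinguished cs w g ∧ sprod cs w g = u ∧ skips w g + 1 = k := by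
  simp only [distinguished_snoc_iff, sprod_snoc, skips_snoc, Bool.false_eq_true, if_false,
    mul_one]
  constructor
  · rintro ⟨⟨hd, hlen⟩, rfl, rfl⟩
    exact ⟨hlen, hd, rfl, rfl⟩
  · rintro ⟨hlen, hd, rfl, rfl⟩
    exact ⟨⟨hd, hlen⟩, rfl, rfl⟩

def distinguishedSnocEquiv (u : W) (k : ℕ) :
    {f : Fin (w ++ [s]).length → Bool // Distinguished cs (w ++ [s]) f ∧
        sprod cs (w ++ [s]) f = u ∧ skips (w ++ [s]) f = k} ≃
      {g : Fin w.length → Bool // Distinguished cs w g ∧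
          sprod cs w g = u * cs.simple s ∧ skips w g = k} ⊕
        {g : Fin w.length → Bool // cs.length u ≤ cs.length (u * cs.simple s) ∧
          Distinguished cs w g ∧ sprod cs w g = u ∧ skips w g + 1 = k} :=
  snocEquiv.subtypeEquivOfSubtype.symm |>.trans Equiv.subtypeSum |>.trans <|
    Equiv.sumCongr (Equiv.subtypeEquivRight (snoc_true_iff cs))
      (Equiv.subtypeEquivRight (snoc_false_iff cs))

end Snoc

end Deodhar

open Deodhar in
theorem deodhar_recurrence_general
    {B : Type*} {W : Type*} [Group W] {M : CoxeterMatrix B}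
    (cs : CoxeterSystem M W) (w : List B) (s₀ : B) (u : W) (k : ℕ) :
    (cs.length (u * cs.simple s₀) < cs.length u →
      Nonempty
        ({f : Fin (w ++ [s₀]).length → Bool // Distinguished cs (w ++ [s₀]) f ∧
            sprod cs (w ++ [s₀]) f = u ∧ skips (w ++ [s₀]) f = k} ≃
         {f : Fin w.length → Bool // Distinguished cs w f ∧
            sprod cs w f = u * cs.simple s₀ ∧ skips w f = k})) ∧
    (cs.length u < cs.length (u * cs.simple s₀) →
      Nonempty
        ({f : Fin (w ++ [s₀]).length → Bool // Distinguished cs (w ++ [s₀]) f ∧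
            sprod cs (w ++ [s₀]) f = u ∧ skips (w ++ [s₀]) f = k} ≃
          ({f : Fin w.length → Bool // Distinguished cs w f ∧
              sprod cs w f = u * cs.simple s₀ ∧ skips w f = k} ⊕
           {f : Fin w.length → Bool // Distinguished cs w f ∧
              sprod cs w f = u ∧ skips w f + 1 = k}))) := by
  refine ⟨fun hdesc => ?_, fun hasc => ?_⟩
  · have : IsEmpty {g : Fin w.length → Bool // cs.length u ≤ cs.length (u * cs.simple s₀) ∧
        Distinguished cs w g ∧ sprod cs w g = u ∧ skips w g + 1 = k} :=
      ⟨fun g => hdesc.not_ge g.2.1⟩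
    exact ⟨(distinguishedSnocEquiv cs u k).trans (Equiv.sumEmpty _ _)⟩
  · exact ⟨(distinguishedSnocEquiv cs u k).trans <| Equiv.sumCongr (Equiv.refl _) <|
      Equiv.subtypeEquivRight fun _ => and_iff_right hasc.le⟩

open Deodhar in
/-- the Deodhar recurrence: for a word `w`, an element `u ∈ W`, and a simple
reflection `s`, the distinguished `u`-subwords of `ws` with exactly `k` skips are in
bijection with: the distinguished `us`-subwords of `w` with `k` skips, if `us < u`; and
with the disjoint union of the distinguished `us`-subwords of `w` with `k` skips and the
distinguished `u`-subwords of `w` with `k - 1` skips, if `us > u`. -/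
theorem deodhar_recurrence
    {B : Type*} {W : Type*} [Group W] [Finite W] {M : CoxeterMatrix B}
    (cs : CoxeterSystem M W) (w : List B) (s₀ : B) (u : W) (k : ℕ) :
    (cs.length (u * cs.simple s₀) < cs.length u →
      Nonempty
        ({f : Fin (w ++ [s₀]).length → Bool // Distinguished cs (w ++ [s₀]) f ∧
            sprod cs (w ++ [s₀]) f = u ∧ skips (w ++ [s₀]) f = k} ≃
         {f : Fin w.length → Bool // Distinguished cs w f ∧
            sprod cs w f = u * cs.simple s₀ ∧ skips w f = k})) ∧
    (cs.length u < cs.length (u * cs.simple s₀) →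
      Nonempty
        ({f : Fin (w ++ [s₀]).length → Bool // Distinguished cs (w ++ [s₀]) f ∧
            sprod cs (w ++ [s₀]) f = u ∧ skips (w ++ [s₀]) f = k} ≃
          ({f : Fin w.length → Bool // Distinguished cs w f ∧
              sprod cs w f = u * cs.simple s₀ ∧ skips w f = k} ⊕
           {f : Fin w.length → Bool // Distinguished cs w f ∧
              sprod cs w f = u ∧ skips w f + 1 = k}))) :=
  deodhar_recurrence_general cs w s₀ u k
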